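/- arXiv:2406.18204 — 4 statements merged into one kernel-verified Lean document; each statement's English description precedes it below -/
import Mathlib

section
/- Suppose 0 < d < 1, 0 < w < 1, t > 0, 0 < τ < t, c > 0, p > 0, and Γd > 0. If the long-term payoff π_c(COOP,COOP) = ((1-d)(Γd·t - p·t) + d·Γd·τ)/(1 - (1-d)w) satisfies π_c(COOP,COOP) ≥ ((1-d)(Γd·τ + w^{j-1}(p·t - Γd·(t-τ))) + d·Γd·τ)/(1 - (1-d)w^j) for some integer j > 1, then w ≥ 1 - (1 - p/Γd)/(τ/t). -/
theorem client_cooperation_condition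
    (d w t τ c p Γd : ℝ) (j : ℕ)
    (hd0 : 0 < d) (hd1 : d < 1) (hw0 : 0 < w) (hw1 : w < 1)
    (ht : 0 < t) (hτ0 : 0 < τ) (hτt : τ < t) (hc : 0 < c) (hp : 0 < p)
    (hΓ : 0 < Γd) (hj : 1 < j)
    (h : ((1 - d) * (Γd * t - p * t) + d * (Γd * τ)) / (1 - (1 - d) * w) ≥
      ((1 - d) * (Γd * τ + w ^ (j - 1) * (p * t - Γd * (t - τ))) + d * (Γd * τ)) /
        (1 - (1 - d) * w ^ j)) :
    w ≥ 1 - (1 - p / Γd) / (τ / t) := by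
  have ha : 0 < 1 - d := by linarith
  have hx0 : 0 < w ^ (j - 1) := pow_pos hw0 _
  have hx1 : w ^ (j - 1) < 1 := pow_lt_one₀ (le_of_lt hw0) hw1 (by omega)
  have hwj : w ^ j = w ^ (j - 1) * w := by
    rw [← pow_succ]; congr 1; omega
  have hD1 : 0 < 1 - (1 - d) * w := by nlinarith
  have hDj : 0 < 1 - (1 - d) * w ^ j := by
    rw [hwj]; nlinarith
  rw [ge_iff_le, div_le_div_iff₀ hDj hD1] at h
  rw [hwj] at h
  set x := w ^ (j - 1) with hxdef
  have h3 : 0 ≤ (1 - d) * (((Γd * t - p * t - Γd * τ) + Γd * τ * w) * (1 - x)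
      + 2 * x * (Γd * t - p * t - Γd * τ) * (1 - (1 - d) * w)) := by nlinarith [h]
  -- key fact: 0 ≤ (Γd*t - p*t - Γd*τ) + Γd*τ*w
  have h4 : 0 ≤ ((Γd * t - p * t - Γd * τ) + Γd * τ * w) * (1 - x)
      + 2 * x * (Γd * t - p * t - Γd * τ) * (1 - (1 - d) * w) :=
    (mul_nonneg_iff_of_pos_left ha).mp h3
  have key : 0 ≤ (Γd * t - p * t - Γd * τ) + Γd * τ * w := by
    by_contra hk
    push_neg at hk
    have hE : Γd * t - p * t - Γd * τ < 0 := by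
      nlinarith [mul_pos (mul_pos hΓ hτ0) hw0]
    have c1 : ((Γd * t - p * t - Γd * τ) + Γd * τ * w) * (1 - x) < 0 :=
      mul_neg_of_neg_of_pos hk (by linarith)
    have c2 : 2 * x * (Γd * t - p * t - Γd * τ) * (1 - (1 - d) * w) < 0 := by
      nlinarith [mul_pos hx0 hD1]
    linarith
  have hτt' : (0:ℝ) < τ / t := by positivity
  have h2 : (1 - w) * (τ / t) ≤ 1 - p / Γd := by
    have e1 : (1 - w) * (τ / t) = ((1 - w) * τ) / t := by ring
    have e2 : 1 - p / Γd = (Γd - p) / Γd := by field_simp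
    rw [e1, e2, div_le_div_iff₀ ht hΓ]
    nlinarith [key]
  rw [ge_iff_le, sub_le_comm, le_div_iff₀ hτt']
  exact h2
end

section
/- Suppose 0 < d < 1, 0 < w < 1, t > 0, 0 < τ < t, c > 0, p > 0. If ((1-d)(pt - ct) + d(-cτ))/(1 - (1-d)w) ≥ ((1-d)((pt - cτ) + w^{j-1}(-c(t-τ))) + d(-cτ))/(1 - (1-d)w^j) for some integer j > 1, then w ≥ (1 - τ/t)/((1-d)p/c - τ/t). -/
/-!
Write `a = 1 - d`, `u = w ^ (j - 1)`, `K = -u_s(R,H) = c (t - τ)`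
and `X = a p t - c τ`. The two payoffs are `(X - a K) / (1 - a w)` and
`(X - a u K) / (1 - a u w)`, and the difference of the cross products factors as
`a (1 - u) (w X - K)`. Since `0 < a` and `u < 1`, the hypothesis says exactly `K ≤ w X`, and
clearing `c t` from the threshold turns it into `K / X`.
-/

theorem cross_mul_sub_cross_mul {R : Type*} [CommRing R] (a u w X K : R) :
    (X - a * K) * (1 - a * u * w) - (X - a * u * K) * (1 - a * w) =
      a * (1 - u) * (w * X - K) := by
  ring

theorem le_mul_of_div_le_div {𝕜 : Type*} [Field 𝕜] [LinearOrder 𝕜] [IsStrictOrderedRing 𝕜]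
    {a u w X K : 𝕜} (ha : 0 < a) (hu : u < 1)
    (hD : 0 < 1 - a * w) (hD' : 0 < 1 - a * u * w)
    (h : (X - a * u * K) / (1 - a * u * w) ≤ (X - a * K) / (1 - a * w)) :
    K ≤ w * X := by
  rw [div_le_div_iff₀ hD' hD] at h
  have hcross : 0 ≤ a * (1 - u) * (w * X - K) := by
    rw [← cross_mul_sub_cross_mul]
    linarith
  have hfactor : 0 < a * (1 - u) := mul_pos ha (sub_pos.mpr hu)
  exact sub_nonneg.mp ((mul_nonneg_iff_of_pos_left hfactor).mp hcross)

theorem one_sub_div_div_sub_div_eq {𝕜 : Type*} [Field 𝕜] {c t : 𝕜} (hc : c ≠ 0) (ht : t ≠ 0)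
    (q τ : 𝕜) : (1 - τ / t) / (q / c - τ / t) = c * (t - τ) / (q * t - c * τ) := by
  rw [← mul_div_mul_right _ _ (mul_ne_zero hc ht)]
  congr 1 <;> field_simp

theorem sp_cooperation_condition_general
    (d w t τ c p : ℝ) (j : ℕ)
    (hd0 : 0 < d) (hd1 : d < 1) (hw0 : 0 < w) (hw1 : w < 1)
    (ht : 0 < t) (hτt : τ < t) (hc : 0 < c)
    (hj : 1 < j)
    (h : ((1 - d) * (p * t - c * t) + d * (-(c * τ))) / (1 - (1 - d) * w) ≥
      ((1 - d) * ((p * t - c * τ) + w ^ (j - 1) * (-(c * (t - τ)))) + d * (-(c * τ))) /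
        (1 - (1 - d) * w ^ j)) :
    w ≥ (1 - τ / t) / ((1 - d) * p / c - τ / t) := by
  set a := 1 - d
  set u := w ^ (j - 1)
  set X := a * p * t - c * τ
  set K := c * (t - τ)
  have ha : 0 < a := sub_pos.mpr hd1
  have ha1 : a ≤ 1 := by linarith
  have hu0 : 0 ≤ u := pow_nonneg hw0.le _
  have hu1 : u < 1 := pow_lt_one₀ hw0.le hw1 (by omega)
  have hwj : a * w ^ j = a * u * w := by rw [mul_assoc, ← pow_succ, Nat.sub_add_cancel hj.le]
  have hD : 0 < 1 - a * w := by nlinarith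
  have hD' : 0 < 1 - a * u * w := by nlinarith [mul_le_mul hu1.le hw1.le hw0.le zero_le_one]
  have hnum : a * (p * t - c * t) + d * (-(c * τ)) = X - a * K := by ring
  have hnum' : a * ((p * t - c * τ) + u * (-(c * (t - τ)))) + d * (-(c * τ)) = X - a * u * K := by
    ring
  rw [hnum, hnum', hwj] at h
  have hKX : K ≤ w * X := le_mul_of_div_le_div ha hu1 hD hD' h
  have hX : 0 < X := pos_of_mul_pos_right ((mul_pos hc (sub_pos.mpr hτt)).trans_le hKX) hw0.le
  rw [ge_iff_le, one_sub_div_div_sub_div_eq hc.ne' ht.ne', div_le_iff₀ hX]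
  exact hKX

theorem sp_cooperation_condition
    (d w t τ c p : ℝ) (j : ℕ)
    (hd0 : 0 < d) (hd1 : d < 1) (hw0 : 0 < w) (hw1 : w < 1)
    (ht : 0 < t) (hτ0 : 0 < τ) (hτt : τ < t) (hc : 0 < c) (hp : 0 < p)
    (hj : 1 < j)
    (h : ((1 - d) * (p * t - c * t) + d * (-(c * τ))) / (1 - (1 - d) * w) ≥
      ((1 - d) * ((p * t - c * τ) + w ^ (j - 1) * (-(c * (t - τ)))) + d * (-(c * τ))) /
        (1 - (1 - d) * w ^ j)) :
    w ≥ (1 - τ / t) / ((1 - d) * p / c - τ / t) :=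
  sp_cooperation_condition_general d w t τ c p j hd0 hd1 hw0 hw1 ht hτt hc hj h
end

section
/- Let Γ0 > c > 0, t > 0, 0 < τ < t. With the linear utility Γ(d)=Γ0(1-d), the equation d_s(w;τ,p) = d_c(w;τ,p), i.e. 1 - c(1-(1-w)τ/t)/(wp) = 1 - p/(Γ0(1-(1-w)τ/t)), viewed as an equation in w ∈ (0,1) for fixed p, τ, has real solutions only if p² ≥ 4cΓ0·(τ/t)(1-τ/t), and in that case the solutions are w_{1,2} = ((p ∓ √(p² - 4cΓ0(τ/t)(1-τ/t)))/(2(τ/t)√(cΓ0)))². -/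
/-! With `r = τ/t` and `A = 1 - (1 - w) r > 0`, clearing denominators turns `d_s = d_c` into
`c Γ0 A² = p² w`. Taking square roots gives `√(c Γ0) A = p √w`, which is the quadratic
`r √(c Γ0) s² - p s + (1 - r) √(c Γ0) = 0` in `s = √w`, with discriminant
`p² - 4 c Γ0 r (1 - r)`; the two roots squared are the two intersection points. -/

open Real

lemma discrim_nonneg_of_quadratic_eq_zero {R : Type*} [CommRing R] [LinearOrder R]
    [IsStrictOrderedRing R] {a b c x : R} (h : a * (x * x) + b * x + c = 0) :
    0 ≤ discrim a b c := by
  rw [discrim_eq_sq_of_quadratic_eq_zero h]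
  positivity

lemma one_sub_div_eq_one_sub_div_iff {c Γ0 A p w : ℝ} (hΓ0 : Γ0 ≠ 0) (hA : A ≠ 0)
    (hp : p ≠ 0) (hw : w ≠ 0) :
    1 - c * A / (w * p) = 1 - p / (Γ0 * A) ↔ c * Γ0 * A ^ 2 = p ^ 2 * w := by
  rw [sub_right_inj, div_eq_div_iff (mul_ne_zero hw hp) (mul_ne_zero hΓ0 hA)]
  constructor <;> intro h <;> linear_combination h

lemma sqrt_mul_eq_sqrt_mul_of_mul_sq_eq {x y a b : ℝ} (ha : 0 ≤ a) (hb : 0 ≤ b)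
    (h : x * a ^ 2 = y * b ^ 2) : √x * a = √y * b := by
  rw [← sqrt_sq ha, ← sqrt_sq hb, ← sqrt_mul' x (sq_nonneg a), ← sqrt_mul' y (sq_nonneg b), h]

theorem threshold_intersection_points_general
    (Γ0 c t τ p w : ℝ)
    (hcΓ : c < Γ0) (hc : 0 < c) (ht : 0 < t) (hτ0 : 0 < τ) (hτt : τ < t)
    (hp : 0 < p) (hw0 : 0 < w)
    (heq : 1 - c * (1 - (1 - w) * (τ / t)) / (w * p) =
      1 - p / (Γ0 * (1 - (1 - w) * (τ / t)))) :
    p ^ 2 ≥ 4 * c * Γ0 * (τ / t) * (1 - τ / t) ∧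
      (w = ((p - Real.sqrt (p ^ 2 - 4 * c * Γ0 * (τ / t) * (1 - τ / t))) /
          (2 * (τ / t) * Real.sqrt (c * Γ0))) ^ 2 ∨
        w = ((p + Real.sqrt (p ^ 2 - 4 * c * Γ0 * (τ / t) * (1 - τ / t))) /
          (2 * (τ / t) * Real.sqrt (c * Γ0))) ^ 2) := by
  set r := τ / t
  have hr0 : 0 < r := div_pos hτ0 ht
  have hr1 : r < 1 := (div_lt_one ht).mpr hτt
  have hΓ0 : 0 < Γ0 := hc.trans hcΓ
  have hA : 0 < 1 - (1 - w) * r := by nlinarith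
  have hcross := (one_sub_div_eq_one_sub_div_iff hΓ0.ne' hA.ne' hp.ne' hw0.ne').mp heq
  have hsqrt : √(c * Γ0) * (1 - (1 - w) * r) = √w * p :=
    sqrt_mul_eq_sqrt_mul_of_mul_sq_eq hA.le hp.le (by linear_combination hcross)
  set k := √(c * Γ0)
  have hquad : (r * k) * (√w * √w) + (-p) * √w + (1 - r) * k = 0 := by
    linear_combination hsqrt + r * k * mul_self_sqrt hw0.le
  have hdiscrim : discrim (r * k) (-p) ((1 - r) * k) = p ^ 2 - 4 * c * Γ0 * r * (1 - r) := by
    rw [discrim]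
    linear_combination -4 * r * (1 - r) * mul_self_sqrt (mul_pos hc hΓ0).le
  have hD : 0 ≤ p ^ 2 - 4 * c * Γ0 * r * (1 - r) :=
    hdiscrim ▸ discrim_nonneg_of_quadratic_eq_zero hquad
  refine ⟨by linarith, ?_⟩
  have hroots :=
    (quadratic_eq_zero_iff (by positivity) (hdiscrim ▸ (mul_self_sqrt hD).symm) _).mp hquad
  rw [← sq_sqrt hw0.le, mul_assoc 2 r k]
  rw [hdiscrim, neg_neg] at hroots
  exact hroots.symm.imp (congrArg (· ^ 2)) (congrArg (· ^ 2))

theorem threshold_intersection_points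
    (Γ0 c t τ p w : ℝ)
    (hcΓ : c < Γ0) (hc : 0 < c) (ht : 0 < t) (hτ0 : 0 < τ) (hτt : τ < t)
    (hp : 0 < p) (hw0 : 0 < w) (hw1 : w < 1)
    (heq : 1 - c * (1 - (1 - w) * (τ / t)) / (w * p) =
      1 - p / (Γ0 * (1 - (1 - w) * (τ / t)))) :
    p ^ 2 ≥ 4 * c * Γ0 * (τ / t) * (1 - τ / t) ∧
      (w = ((p - Real.sqrt (p ^ 2 - 4 * c * Γ0 * (τ / t) * (1 - τ / t))) /
          (2 * (τ / t) * Real.sqrt (c * Γ0))) ^ 2 ∨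
        w = ((p + Real.sqrt (p ^ 2 - 4 * c * Γ0 * (τ / t) * (1 - τ / t))) /
          (2 * (τ / t) * Real.sqrt (c * Γ0))) ^ 2) :=
  threshold_intersection_points_general Γ0 c t τ p w hcΓ hc ht hτ0 hτt hp hw0 heq
end

section
/- Let Γ : [0,1] → ℝ be strictly decreasing with Γ(d) > 0, and let c > 0, t > 0, 0 < d < 1, 0 < w < 1 with w > c/((1-d)Γ(d)). If p = Γ(d)(1 - τ/t) + (c/(1-d))(τ/t) for some τ ∈ (0, t·(Γ(d)-c)/(Γ(d) - c/(1-d))) (assuming Γ(d) > c/(1-d)), then both cooperation conditions hold: w > (1-τ/t)/((1-d)p/c - τ/t) and w > 1 - (1 - p/Γ(d))/(τ/t). -/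
/-! Write `s = τ / t` and `a = c / (1 - d)`, so that `p = Γ(d) (1 - s) + a s` is the convex
combination of `Γ(d)` and `a`. Substituting this price, both cooperation thresholds collapse to the
same number `a / Γ(d) = c / ((1 - d) Γ(d))` (the SP's one to `0` when `τ = t`, where Lean's
division by zero gives `0`), so the necessary condition `w > c / ((1 - d) Γ(d))` is sufficient. -/

section PriceTrialTime

variable {G a s p : ℝ}

theorem client_threshold_eq (hG : G ≠ 0) (hs : s ≠ 0) (hp : p = G * (1 - s) + a * s) :
    1 - (1 - p / G) / s = a / G := by
  subst hp
  field_simp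
  ring

theorem sp_threshold_eq (ha : a ≠ 0) (hs : s ≠ 1) (hp : p = G * (1 - s) + a * s) :
    (1 - s) / (p / a - s) = a / G := by
  have hden : p / a - s = G / a * (1 - s) := by
    subst hp
    field_simp
    ring
  rw [hden, div_mul_eq_div_div_swap, div_self (sub_ne_zero.mpr hs.symm), one_div_div]

theorem sp_threshold_le (hG : 0 ≤ G) (ha : 0 < a) (hp : p = G * (1 - s) + a * s) :
    (1 - s) / (p / a - s) ≤ a / G := by
  rcases eq_or_ne s 1 with rfl | hs
  · simpa using div_nonneg ha.le hG
  · exact (sp_threshold_eq ha.ne' hs hp).le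

end PriceTrialTime

theorem necessary_condition_is_sufficient_general
    (Γ : ℝ → ℝ) (c t d w τ p : ℝ)
    (hc : 0 < c) (ht : 0 < t) (hd1 : d < 1)
    (hwnec : w > c / ((1 - d) * Γ d))
    (hΓbig : Γ d > c / (1 - d))
    (hτ0 : 0 < τ)
    (hpeq : p = Γ d * (1 - τ / t) + (c / (1 - d)) * (τ / t)) :
    w > (1 - τ / t) / ((1 - d) * p / c - τ / t) ∧
      w > 1 - (1 - p / Γ d) / (τ / t) := by
  have ha : 0 < c / (1 - d) := div_pos hc (sub_pos.mpr hd1)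
  have hG : 0 < Γ d := ha.trans hΓbig
  have hthreshold : c / (1 - d) / Γ d = c / ((1 - d) * Γ d) := div_div c (1 - d) (Γ d)
  constructor
  · have hprice : (1 - d) * p / c = p / (c / (1 - d)) := by rw [div_div_eq_mul_div, mul_comm]
    rw [hprice]
    exact ((sp_threshold_le hG.le ha hpeq).trans_eq hthreshold).trans_lt hwnec
  · rw [client_threshold_eq hG.ne' (div_pos hτ0 ht).ne' hpeq, hthreshold]
    exact hwnec

theorem necessary_condition_is_sufficient
    (Γ : ℝ → ℝ) (c t d w τ p : ℝ)
    (hΓanti : StrictAntiOn Γ (Set.Icc 0 1))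
    (hΓpos : ∀ x ∈ Set.Icc (0:ℝ) 1, 0 < Γ x)
    (hc : 0 < c) (ht : 0 < t) (hd0 : 0 < d) (hd1 : d < 1)
    (hw0 : 0 < w) (hw1 : w < 1)
    (hwnec : w > c / ((1 - d) * Γ d))
    (hΓbig : Γ d > c / (1 - d))
    (hτ0 : 0 < τ) (hτub : τ < t * (Γ d - c) / (Γ d - c / (1 - d)))
    (hpeq : p = Γ d * (1 - τ / t) + (c / (1 - d)) * (τ / t)) :
    w > (1 - τ / t) / ((1 - d) * p / c - τ / t) ∧
      w > 1 - (1 - p / Γ d) / (τ / t) :=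
  necessary_condition_is_sufficient_general Γ c t d w τ p hc ht hd1 hwnec hΓbig hτ0 hpeq
end
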